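/- For every k ∈ ℕ and every formal power series f over a commutative ring R, the identity (δ_k ⊙ f)′ · x^k = ( (δ_k ⊙ f) · x^k )′ · S_k holds, where the prime denotes the binomial modulo 2 transform and S_k is the k-th Sierpiński polynomial. -/

import Mathlib

/-!
Read `a &&& b = a` as "`a` is a submask of `b`". Coefficientwise, the binomial modulo 2 transform
sums `f[j]` over the submasks `j` of `n` (Lucas' theorem modulo 2), and `S_k` is the sum of `x^s`
over the submasks `s` of `k`. For `j` sharing no bit with `k`, the `x^j`-contribution to the
`n`-th coefficient of the right-hand side counts the submasks `s` of `k` with `k + j` a submask of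
`n - s`; there is exactly one, namely `(n - k) &&& k`, when `j` is a submask of `n - k`, and none
otherwise, which is the `x^j`-contribution to the left-hand side.
-/

/-- The Sierpiński polynomial `S m = ∏_{j≥0} (1 + X^(2^j))^(d_j m)` where `d_j m` is the
`j`-th binary digit of `m`. -/
noncomputable def Sier (R : Type*) [CommRing R] (m : ℕ) : Polynomial R :=
  ∏ j ∈ Finset.range (m + 1), if m.testBit j then 1 + Polynomial.X ^ (2 ^ j) else 1

/-- `δ k`: the power series whose `m`-th coefficient is `1` if `m AND k = 0`, else `0`. -/
noncomputable def delta (R : Type*) [CommRing R] (k : ℕ) : PowerSeries R :=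
  PowerSeries.mk fun m => if m &&& k = 0 then 1 else 0

/-- Termwise (Hadamard) product of power series. -/
noncomputable def hadS {R : Type*} [CommRing R] (f g : PowerSeries R) : PowerSeries R :=
  PowerSeries.mk fun n => PowerSeries.coeff n f * PowerSeries.coeff n g

/-- The binomial modulo 2 transform: `f'[n] = Σ_{0≤k≤n, (n-k) AND k = 0} f[k]`. -/
noncomputable def bmt {R : Type*} [CommRing R] (f : PowerSeries R) : PowerSeries R :=
  PowerSeries.mk fun n => ∑ k ∈ Finset.range (n + 1),
    if (n - k) &&& k = 0 then PowerSeries.coeff k f else 0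

namespace Nat

theorem add_eq_or_of_and_eq_zero {a b : ℕ} (h : a &&& b = 0) : a + b = a ||| b := by
  have hab : a + b < 2 ^ (a + b) := Nat.lt_two_pow_self
  have := congrArg BitVec.toNat <| BitVec.add_eq_or_of_and_eq_zero (BitVec.ofNat (a + b) a)
    (BitVec.ofNat _ b) (by rw [← BitVec.ofNat_and, h])
  simpa [Nat.mod_eq_of_lt, hab, (Nat.le_add_right a b).trans_lt hab,
    (Nat.le_add_left b a).trans_lt hab] using this

theorem bitIndices_toFinset_subset_iff {a b : ℕ} :
    a.bitIndices.toFinset ⊆ b.bitIndices.toFinset ↔ a &&& b = a := by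
  simp [Finset.subset_iff, eq_iff_testBit_eq]

theorem sub_eq_xor_of_and_eq {a b : ℕ} (h : b &&& a = b) : a - b = a ^^^ b := by
  have hdisj : (a ^^^ b) &&& b = 0 := by
    simp only [eq_iff_testBit_eq, testBit_and, testBit_xor, zero_testBit] at h ⊢
    grind
  have hor : (a ^^^ b) ||| b = a := by
    simp only [eq_iff_testBit_eq, testBit_and, testBit_or, testBit_xor] at h ⊢
    grind
  have := add_eq_or_of_and_eq_zero hdisj
  omega

theorem sub_and_eq_zero_iff {j n : ℕ} (h : j ≤ n) : (n - j) &&& j = 0 ↔ j &&& n = j := by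
  refine ⟨fun hdisj => ?_, fun hsub => ?_⟩
  · have hn : n = (n - j) ||| j := by rw [← add_eq_or_of_and_eq_zero hdisj]; omega
    rw [hn]
    simp only [eq_iff_testBit_eq, testBit_and, testBit_or, zero_testBit] at hdisj ⊢
    grind
  · rw [sub_eq_xor_of_and_eq hsub]
    simp only [eq_iff_testBit_eq, testBit_and, testBit_xor, zero_testBit] at hsub ⊢
    grind

/- Since `j` and `k` share no bits, `k + j = k ||| j`; writing `n - s = k ||| r`, one finds
`n - k = s ||| r`, so `s` is forced to be the part of `n - k` lying under `k`. -/
theorem submask_and_add_submask_sub_iff {j k n s : ℕ} (hjk : j &&& k = 0) (hs : s ≤ n) :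
    (s &&& k = s ∧ (k + j) &&& (n - s) = k + j) ↔
      s = (n - k) &&& k ∧ k ≤ n ∧ j &&& (n - k) = j := by
  rw [add_eq_or_of_and_eq_zero (by rwa [Nat.and_comm])]
  constructor
  · rintro ⟨hsk, hkj⟩
    have hkm : k &&& (n - s) = k := by
      simp only [eq_iff_testBit_eq, testBit_and, testBit_or] at hkj ⊢
      grind
    have hm := sub_eq_xor_of_and_eq hkm
    have hkm_le : k ≤ n - s := hkm ▸ Nat.and_le_right
    have hsr : s &&& ((n - s) ^^^ k) = 0 := by
      simp only [eq_iff_testBit_eq, testBit_and, testBit_xor, zero_testBit] at hsk hkm ⊢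
      grind
    have hnk : n - k = s ||| ((n - s) ^^^ k) := by
      rw [← add_eq_or_of_and_eq_zero hsr]; omega
    refine ⟨?_, by omega, ?_⟩ <;> rw [hnk] <;>
      simp only [eq_iff_testBit_eq, testBit_and, testBit_or, testBit_xor, zero_testBit]
        at hjk hsk hkj ⊢ <;> grind
  · rintro ⟨rfl, hkn, hjn⟩
    have hsm : ((n - k) &&& k) &&& (n - k) = (n - k) &&& k := by
      rw [Nat.and_comm, ← Nat.and_assoc, Nat.and_self]
    have hr := sub_eq_xor_of_and_eq hsm
    have hle : (n - k) &&& k ≤ n - k := Nat.and_le_left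
    have hkr : k &&& ((n - k) ^^^ ((n - k) &&& k)) = 0 := by
      simp only [eq_iff_testBit_eq, testBit_and, testBit_xor, zero_testBit]
      grind
    have hns : n - (n - k &&& k) = k ||| ((n - k) ^^^ ((n - k) &&& k)) := by
      rw [← add_eq_or_of_and_eq_zero hkr]; omega
    refine ⟨by rw [Nat.and_assoc, Nat.and_self], ?_⟩
    rw [hns]
    simp only [eq_iff_testBit_eq, testBit_and, testBit_or, testBit_xor, zero_testBit]
      at hjk hjn ⊢
    grind

end Nat

open Finset

section

variable {R : Type*} [CommRing R]

open Polynomial in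
theorem Sier_eq_prod_bitIndices (k : ℕ) :
    Sier R k = ∏ j ∈ k.bitIndices.toFinset, (1 + X ^ 2 ^ j) := by
  rw [Sier, ← prod_filter]
  congr 1
  ext j
  simp only [mem_filter, mem_range, List.mem_toFinset, Nat.mem_bitIndices, and_iff_right_iff_imp]
  intro h
  exact ((Nat.lt_pow_self one_lt_two).trans_le (Nat.ge_two_pow_of_testBit h)).trans
    (Nat.lt_succ_self k)

open Polynomial in
theorem coeff_Sier (k s : ℕ) :
    (Sier R k).coeff s = if s &&& k = s then 1 else 0 := by
  have hs (t : Finset ℕ) : s = ∑ i ∈ t, 2 ^ i ↔ s.bitIndices.toFinset = t :=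
    Finset.equivBitIndices.eq_symm_apply
  simp_rw [Sier_eq_prod_bitIndices, prod_one_add, finsetSum_coeff, prod_pow_eq_pow_sum,
    coeff_X_pow, hs, sum_ite_eq, mem_powerset, Nat.bitIndices_toFinset_subset_iff]

open PowerSeries

theorem coeff_bmt_eq_sum_range {n N : ℕ} (hn : n < N) (g : R⟦X⟧) :
    coeff n (bmt g) = ∑ j ∈ range N, if j &&& n = j then coeff j g else 0 := by
  rw [bmt, coeff_mk, sum_congr rfl fun j hj =>
    if_congr (Nat.sub_and_eq_zero_iff (Nat.le_of_lt_succ (mem_range.1 hj))) rfl rfl]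
  refine sum_subset (range_subset_range.2 hn) fun j _ hj => if_neg fun h => hj ?_
  exact mem_range.2 (Nat.lt_succ_of_le (h ▸ Nat.and_le_right))

theorem coeff_bmt_mul_X_pow {n N : ℕ} (hn : n < N) (g : R⟦X⟧) (k : ℕ) :
    coeff n (bmt (g * X ^ k)) =
      ∑ j ∈ range N, if (k + j) &&& n = k + j then coeff j g else 0 := by
  rw [coeff_bmt_eq_sum_range (hn.trans_le (Nat.le_add_left N k)), sum_range_add,
    sum_eq_zero fun t ht => ?_, zero_add]
  · simp [coeff_mul_X_pow']
  · simp [coeff_mul_X_pow', Nat.not_le.2 (mem_range.1 ht)]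

theorem bmt_mul_X_pow (k : ℕ) (g : R⟦X⟧) (hg : ∀ j, j &&& k ≠ 0 → coeff j g = 0) :
    bmt g * X ^ k = bmt (g * X ^ k) * (Sier R k : R⟦X⟧) := by
  ext n
  rw [coeff_mul_X_pow', mul_comm (bmt _), coeff_mul,
    Finset.Nat.sum_antidiagonal_eq_sum_range_succ_mk]
  simp_rw [Polynomial.coeff_coe, coeff_Sier, ite_mul, one_mul, zero_mul]
  have hlhs : (if k ≤ n then coeff (n - k) (bmt g) else 0) =
      ∑ j ∈ range (n + 1), if k ≤ n ∧ j &&& (n - k) = j then coeff j g else 0 := by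
    split_ifs with hkn
    · simp [coeff_bmt_eq_sum_range (n := n - k) (N := n + 1) (by omega), hkn]
    · simp [hkn]
  have hrhs : ∀ s ∈ range (n + 1),
      (if s &&& k = s then coeff (n - s) (bmt (g * X ^ k)) else 0) = ∑ j ∈ range (n + 1),
        if s &&& k = s ∧ (k + j) &&& (n - s) = k + j then coeff j g else 0 := by
    intro s hs
    split_ifs with hsk
    · simp [coeff_bmt_mul_X_pow (n := n - s) (N := n + 1) (by omega), hsk]
    · simp [hsk]
  rw [hlhs, sum_congr rfl hrhs, sum_comm]
  refine sum_congr rfl fun j _ => ?_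
  by_cases hjk : j &&& k = 0
  · rw [sum_congr rfl fun s hs => if_congr
      (Nat.submask_and_add_submask_sub_iff hjk (Nat.le_of_lt_succ (mem_range.1 hs))) rfl rfl]
    have hmem : (n - k) &&& k ∈ range (n + 1) :=
      mem_range.2 (Nat.lt_succ_of_le (Nat.and_le_left.trans (Nat.sub_le n k)))
    simp_rw [ite_and]
    rw [sum_ite_eq', if_pos hmem]
  · simp [hg j hjk]

end

/-- For every k and power series f,
(δ k ⊙ f)' * x^k = ((δ k ⊙ f) * x^k)' * S k. -/
theorem bmt_delta_had_shift (R : Type*) [CommRing R] (k : ℕ) (f : PowerSeries R) :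
    bmt (hadS (delta R k) f) * PowerSeries.X ^ k =
      bmt (hadS (delta R k) f * PowerSeries.X ^ k) * (Sier R k : PowerSeries R) :=
  bmt_mul_X_pow k _ fun j hj => by simp [hadS, delta, hj]
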